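/- For subspaces U and W of R^n with projection matrices P_U and P_W and dim U = dim W, the quantities ‖(I − P_U)P_W‖ and ‖(I − P_W)P_U‖ are equal, and both equal the sine of the largest principal angle between U and W. -/

import Mathlib

open Matrix

/-- View a plain vector as an element of Euclidean space. -/
noncomputable def toEuc {n : ℕ} (v : Fin n → ℝ) : EuclideanSpace ℝ (Fin n) := WithLp.toLp 2 v

/-- The row space of a matrix, as a subspace of Euclidean space `ℝ^n`. -/
noncomputable def rowSpace {m : Type*} {n : ℕ} (A : Matrix m (Fin n) ℝ) :
    Submodule ℝ (EuclideanSpace ℝ (Fin n)) :=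
  Submodule.span ℝ (Set.range fun i => toEuc (A i))

/-- The orthogonal projection matrix onto a subspace of `ℝ^n`. -/
noncomputable def projMat {n : ℕ} (U : Submodule ℝ (EuclideanSpace ℝ (Fin n))) :
    Matrix (Fin n) (Fin n) ℝ :=
  Matrix.toEuclideanLin.symm (U.subtype ∘ₗ (U.orthogonalProjectionOnto).toLinearMap)

/-- The operator (spectral) norm of a matrix. -/
noncomputable def opNorm {m : Type*} [Fintype m] {n : ℕ} (A : Matrix m (Fin n) ℝ) : ℝ :=
  ‖(Matrix.toEuclideanLin A).toContinuousLinearMap‖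

theorem Matrix.isHermitian_transpose_mul_self {m : Type*} [Fintype m] {n : ℕ}
    (A : Matrix m (Fin n) ℝ) : (Aᵀ * A).IsHermitian := by
  rw [IsHermitian, conjTranspose_eq_transpose_of_trivial, transpose_mul, transpose_transpose]

/-- Singular values of a matrix, in ascending order. -/
noncomputable def svalAsc {m : Type*} [Fintype m] {n : ℕ} (A : Matrix m (Fin n) ℝ) :
    Fin n → ℝ := fun i =>
  Real.sqrt ((Matrix.isHermitian_transpose_mul_self A).eigenvalues
    (Tuple.sort (Matrix.isHermitian_transpose_mul_self A).eigenvalues i))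

/-- Singular values of a matrix, in descending order (`svalDesc A 0` is the largest). -/
noncomputable def svalDesc {m : Type*} [Fintype m] {n : ℕ} (A : Matrix m (Fin n) ℝ)
    (i : Fin n) : ℝ :=
  svalAsc A i.rev

/-!
With orthonormal bases `B_U`, `B_W` one has `P_U = B_U B_Uᵀ` and `P_W = B_W B_Wᵀ`. Writing
`S = B_Uᵀ B_W` and `M = (1 - P_U) P_W`, a direct computation gives `MᵀM = B_W (1 - SᵀS) B_Wᵀ`, and
conjugation by the isometry `B_W` preserves the operator norm, so `‖M‖² = ‖1 - SᵀS‖`. Since the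
eigenvalues of `SᵀS` lie in `[0, 1]`, this is `1 - σ_min(S)²`, the squared sine of the largest
principal angle. Exchanging `U` and `W` replaces `S` by `Sᵀ`, and `SᵀS`, `SSᵀ` have the same
characteristic polynomial, hence `S` and `Sᵀ` have the same singular values.
-/

section L2OpNorm

open scoped Matrix.Norms.L2Operator

lemma opNorm_eq_l2_opNorm {m : Type*} [Fintype m] {n : ℕ} (A : Matrix m (Fin n) ℝ) :
    opNorm A = ‖A‖ :=
  rfl

namespace Matrix

section RCLike

open Unitary

variable {𝕜 : Type*} [RCLike 𝕜] {m n : Type*} [Fintype m] [Fintype n] [DecidableEq n]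

lemma l2_opNorm_one_le : ‖(1 : Matrix n n 𝕜)‖ ≤ 1 := by
  rw [← diagonal_one, l2_opNorm_diagonal]
  exact (pi_norm_le_iff_of_nonneg zero_le_one).2 fun i => by simp

lemma l2_opNorm_le_one_of_conjTranspose_mul_self_eq_one {B : Matrix m n 𝕜} (hB : Bᴴ * B = 1) :
    ‖B‖ ≤ 1 := by
  have h := l2_opNorm_conjTranspose_mul_self B
  rw [hB] at h
  nlinarith [norm_nonneg B, l2_opNorm_one_le (𝕜 := 𝕜) (n := n)]

lemma l2_opNorm_mul_mul_conjTranspose_le [DecidableEq m] {C : Matrix m n 𝕜} (hC : ‖C‖ ≤ 1)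
    (Y : Matrix n n 𝕜) : ‖C * Y * Cᴴ‖ ≤ ‖Y‖ :=
  calc ‖C * Y * Cᴴ‖ ≤ ‖C‖ * ‖Y‖ * ‖Cᴴ‖ :=
        (l2_opNorm_mul _ _).trans (by gcongr; exact l2_opNorm_mul _ _)
    _ ≤ 1 * ‖Y‖ * 1 := by rw [l2_opNorm_conjTranspose]; gcongr
    _ = ‖Y‖ := by ring

lemma l2_opNorm_mul_mul_conjTranspose [DecidableEq m] {B : Matrix m n 𝕜} (hB : Bᴴ * B = 1)
    (X : Matrix n n 𝕜) : ‖B * X * Bᴴ‖ = ‖X‖ := by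
  have hB1 := l2_opNorm_le_one_of_conjTranspose_mul_self_eq_one hB
  refine le_antisymm (l2_opNorm_mul_mul_conjTranspose_le hB1 X) ?_
  calc ‖X‖ = ‖Bᴴ * (B * X * Bᴴ) * Bᴴᴴ‖ := by
        simp only [conjTranspose_conjTranspose, ← Matrix.mul_assoc, hB, Matrix.one_mul]
        simp only [Matrix.mul_assoc, hB, Matrix.mul_one]
    _ ≤ ‖B * X * Bᴴ‖ :=
        l2_opNorm_mul_mul_conjTranspose_le ((l2_opNorm_conjTranspose B).trans_le hB1) _

lemma l2_opNorm_conjStarAlgAut_diagonal (U : unitaryGroup n 𝕜) (d : n → ℝ) :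
    ‖conjStarAlgAut 𝕜 _ U (diagonal (RCLike.ofReal ∘ d))‖ = ‖d‖ := by
  rw [conjStarAlgAut_apply, CStarRing.norm_mul_mem_unitary _ (star_mem U.2),
    CStarRing.norm_coe_unitary_mul, l2_opNorm_diagonal]
  simp [Pi.norm_def]

lemma IsHermitian.l2_opNorm_eq_norm_eigenvalues {A : Matrix n n 𝕜} (hA : A.IsHermitian) :
    ‖A‖ = ‖hA.eigenvalues‖ := by
  conv_lhs => rw [hA.spectral_theorem]
  exact l2_opNorm_conjStarAlgAut_diagonal _ _

lemma IsHermitian.l2_opNorm_one_sub {A : Matrix n n 𝕜} (hA : A.IsHermitian) :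
    ‖1 - A‖ = ‖1 - hA.eigenvalues‖ := by
  have h : 1 - A = conjStarAlgAut 𝕜 _ hA.eigenvectorUnitary
      (diagonal (RCLike.ofReal ∘ (1 - hA.eigenvalues))) := by
    conv_lhs => rw [hA.spectral_theorem]
    rw [← map_one (conjStarAlgAut 𝕜 _ hA.eigenvectorUnitary), ← map_sub, ← diagonal_one,
      diagonal_sub]
    congr 2
    ext i
    simp
  rw [h, l2_opNorm_conjStarAlgAut_diagonal]

end RCLike

section SingularValues

variable {m : Type*} [Fintype m] {n : ℕ}

lemma sq_svalAsc (A : Matrix m (Fin n) ℝ) (i : Fin n) :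
    svalAsc A i ^ 2 = (isHermitian_transpose_mul_self A).eigenvalues
      (Tuple.sort (isHermitian_transpose_mul_self A).eigenvalues i) :=
  Real.sq_sqrt (eigenvalues_conjTranspose_mul_self_nonneg A _)

lemma sq_svalAsc_zero_le (A : Matrix m (Fin n) ℝ) (hn : 0 < n) (j : Fin n) :
    svalAsc A ⟨0, hn⟩ ^ 2 ≤ (isHermitian_transpose_mul_self A).eigenvalues j := by
  rw [sq_svalAsc]
  set f := (isHermitian_transpose_mul_self A).eigenvalues
  simpa using Tuple.monotone_sort f
    (show (⟨0, hn⟩ : Fin n) ≤ (Tuple.sort f).symm j from Nat.zero_le _)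

lemma svalAsc_transpose (S : Matrix (Fin n) (Fin n) ℝ) : svalAsc Sᵀ = svalAsc S := by
  have h : (isHermitian_transpose_mul_self Sᵀ).eigenvalues
      = (isHermitian_transpose_mul_self S).eigenvalues := by
    rw [IsHermitian.eigenvalues_eq_eigenvalues_iff, transpose_transpose, charpoly_mul_comm]
  ext i
  simp only [svalAsc, h]

lemma l2_opNorm_one_sub_transpose_mul_self {S : Matrix m (Fin n) ℝ} (hS : ‖S‖ ≤ 1)
    (hn : 0 < n) : ‖1 - Sᵀ * S‖ = 1 - svalAsc S ⟨0, hn⟩ ^ 2 := by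
  set hA := isHermitian_transpose_mul_self S
  have hle : ∀ i, hA.eigenvalues i ≤ 1 := fun i =>
    calc hA.eigenvalues i ≤ ‖hA.eigenvalues‖ := (Real.le_norm_self _).trans (norm_le_pi_norm _ i)
      _ = ‖S‖ * ‖S‖ := by
        rw [← hA.l2_opNorm_eq_norm_eigenvalues, ← conjTranspose_eq_transpose_of_trivial,
          l2_opNorm_conjTranspose_mul_self]
      _ ≤ 1 := by nlinarith [norm_nonneg S]
  have hmin := sq_svalAsc_zero_le S hn
  rw [hA.l2_opNorm_one_sub]
  refine le_antisymm ((pi_norm_le_iff_of_nonneg ?_).2 fun i => ?_) ?_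
  · linarith [hmin ⟨0, hn⟩, hle ⟨0, hn⟩]
  · rw [Pi.sub_apply, Pi.one_apply, Real.norm_eq_abs, abs_le]
    constructor <;>
      linarith [hmin i, hle i, hmin ⟨0, hn⟩, eigenvalues_conjTranspose_mul_self_nonneg S i]
  · rw [sq_svalAsc]
    refine (le_of_eq ?_).trans
      (norm_le_pi_norm (1 - hA.eigenvalues) (Tuple.sort hA.eigenvalues ⟨0, hn⟩))
    rw [Pi.sub_apply, Pi.one_apply, Real.norm_eq_abs, abs_of_nonneg (sub_nonneg.2 (hle _))]

end SingularValues

section Projections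

variable {m n : Type*} [Fintype m] [Fintype n] [DecidableEq m] [DecidableEq n]

lemma transpose_mul_self_one_sub_mul_mul_transpose {BU BW : Matrix m n ℝ}
    (hBU : BUᵀ * BU = 1) (hBW : BWᵀ * BW = 1) :
    ((1 - BU * BUᵀ) * (BW * BWᵀ))ᵀ * ((1 - BU * BUᵀ) * (BW * BWᵀ))
      = BW * (1 - (BUᵀ * BW)ᵀ * (BUᵀ * BW)) * BWᵀ := by
  have cancel : ∀ {B : Matrix m n ℝ}, Bᵀ * B = 1 → ∀ X : Matrix n m ℝ, Bᵀ * (B * X) = X :=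
    fun hB X => by rw [← Matrix.mul_assoc, hB, Matrix.one_mul]
  simp only [transpose_mul, transpose_sub, transpose_transpose, Matrix.mul_sub,
    Matrix.sub_mul, Matrix.mul_one, Matrix.one_mul, Matrix.mul_assoc, cancel hBU, cancel hBW]
  abel

lemma l2_opNorm_one_sub_mul_mul_transpose {p : ℕ} {BU BW : Matrix m (Fin p) ℝ}
    (hBU : BUᵀ * BU = 1) (hBW : BWᵀ * BW = 1) (hp : 0 < p) :
    ‖(1 - BU * BUᵀ) * (BW * BWᵀ)‖ = √(1 - svalAsc (BUᵀ * BW) ⟨0, hp⟩ ^ 2) := by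
  have hBU' : BUᴴ * BU = 1 := hBU
  have hBW' : BWᴴ * BW = 1 := hBW
  have hBU1 : ‖BUᵀ‖ ≤ 1 := (l2_opNorm_conjTranspose BU).trans_le
    (l2_opNorm_le_one_of_conjTranspose_mul_self_eq_one hBU')
  have hS : ‖BUᵀ * BW‖ ≤ 1 := (l2_opNorm_mul _ _).trans <|
    mul_le_one₀ hBU1 (norm_nonneg _) (l2_opNorm_le_one_of_conjTranspose_mul_self_eq_one hBW')
  rw [← l2_opNorm_one_sub_transpose_mul_self hS hp,
    ← l2_opNorm_mul_mul_conjTranspose hBW', ← Real.sqrt_mul_self (norm_nonneg _),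
    ← l2_opNorm_conjTranspose_mul_self]
  exact congr(√‖$(transpose_mul_self_one_sub_mul_mul_transpose hBU hBW)‖)

end Projections

end Matrix

end L2OpNorm

section RowSpace

open scoped RealInnerProductSpace

lemma toEuc_mulVec_mem_rowSpace_transpose {n : ℕ} {m : Type*} [Fintype m]
    (B : Matrix (Fin n) m ℝ) (c : m → ℝ) : toEuc (B *ᵥ c) ∈ rowSpace Bᵀ := by
  rw [mulVec_eq_sum, toEuc, WithLp.toLp_sum]
  exact Submodule.sum_mem _ fun i _ => by
    rw [op_smul_eq_smul, WithLp.toLp_smul]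
    exact Submodule.smul_mem _ _ (Submodule.subset_span ⟨i, rfl⟩)

lemma mem_orthogonal_rowSpace_iff {m : Type*} {n : ℕ} (A : Matrix m (Fin n) ℝ)
    (z : EuclideanSpace ℝ (Fin n)) : z ∈ (rowSpace A)ᗮ ↔ A *ᵥ z = 0 := by
  have hrow : ∀ i, ⟪toEuc (A i), z⟫ = (A *ᵥ z) i := fun i => by
    simp [toEuc, EuclideanSpace.inner_eq_star_dotProduct, mulVec, dotProduct_comm]
  refine ⟨fun hz => funext fun i => (hrow i).symm.trans (hz _ (Submodule.subset_span ⟨i, rfl⟩)),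
    fun hz u hu => ?_⟩
  have hspan : rowSpace A ≤ (ℝ ∙ z)ᗮ := Submodule.span_le.2 <| by
    rintro _ ⟨i, rfl⟩
    rw [SetLike.mem_coe, Submodule.mem_orthogonal_singleton_iff_inner_left, hrow, hz, Pi.zero_apply]
  exact Submodule.mem_orthogonal_singleton_iff_inner_left.1 (hspan hu)

lemma projMat_rowSpace_transpose {n p : ℕ} {B : Matrix (Fin n) (Fin p) ℝ} (hB : Bᵀ * B = 1) :
    projMat (rowSpace Bᵀ) = B * Bᵀ := by
  rw [projMat, LinearEquiv.symm_apply_eq]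
  ext1 x
  refine Submodule.eq_starProjection_of_mem_orthogonal ?_ ?_
  · rw [toLpLin_apply, ← mulVec_mulVec]
    exact toEuc_mulVec_mem_rowSpace_transpose B _
  · rw [mem_orthogonal_rowSpace_iff, toLpLin_apply, WithLp.ofLp_sub,
      mulVec_sub, mulVec_mulVec, ← Matrix.mul_assoc, hB, Matrix.one_mul, sub_self]

end RowSpace

theorem opNorm_one_sub_proj_mul_proj_comm_eq_sin_general (n p : ℕ) (hp : 0 < p)
    (U W : Submodule ℝ (EuclideanSpace ℝ (Fin n)))
    (BU BW : Matrix (Fin n) (Fin p) ℝ)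
    (hBU1 : BUᵀ * BU = 1) (hBU2 : rowSpace BUᵀ = U)
    (hBW1 : BWᵀ * BW = 1) (hBW2 : rowSpace BWᵀ = W) :
    opNorm ((1 - projMat U) * projMat W) = opNorm ((1 - projMat W) * projMat U) ∧
    opNorm ((1 - projMat U) * projMat W)
      = Real.sin (Real.arccos (svalAsc (BUᵀ * BW) ⟨0, hp⟩)) := by
  subst hBU2 hBW2
  have hswap : BWᵀ * BU = (BUᵀ * BW)ᵀ := by rw [transpose_mul, transpose_transpose]
  simp only [projMat_rowSpace_transpose hBU1, projMat_rowSpace_transpose hBW1,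
    opNorm_eq_l2_opNorm, l2_opNorm_one_sub_mul_mul_transpose hBU1 hBW1 hp,
    l2_opNorm_one_sub_mul_mul_transpose hBW1 hBU1 hp, hswap, svalAsc_transpose, Real.sin_arccos,
    and_self]

/-- for equal-dimensional subspaces `U`, `W` of `ℝ^n`,
`‖(I − P_U) P_W‖ = ‖(I − P_W) P_U‖`, and both equal the sine of the largest principal
angle between `U` and `W` (whose cosine is the smallest singular value of `BUᵀ * BW`). -/
theorem opNorm_one_sub_proj_mul_proj_comm_eq_sin (n p : ℕ) (hp : 0 < p)
    (U W : Submodule ℝ (EuclideanSpace ℝ (Fin n)))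
    (BU BW : Matrix (Fin n) (Fin p) ℝ)
    (hBU1 : BUᵀ * BU = 1) (hBU2 : rowSpace BUᵀ = U)
    (hBW1 : BWᵀ * BW = 1) (hBW2 : rowSpace BWᵀ = W)
    (hdim : Module.finrank ℝ U = Module.finrank ℝ W) :
    opNorm ((1 - projMat U) * projMat W) = opNorm ((1 - projMat W) * projMat U) ∧
    opNorm ((1 - projMat U) * projMat W)
      = Real.sin (Real.arccos (svalAsc (BUᵀ * BW) ⟨0, hp⟩)) :=
  opNorm_one_sub_proj_mul_proj_comm_eq_sin_general n p hp U W BU BW hBU1 hBU2 hBW1 hBW2
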